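/- For natural numbers m ≠ n, ∫_{−∞}^{∞} H_m(x) H_n(x) e^{−x²} dx = 0, where H_k denotes the physicists' Hermite polynomial. That is, the physicists' Hermite polynomials are pairwise orthogonal on ℝ with respect to the weight function ω(x) = e^{−x²}. -/

import Mathlib

/-! The Hermite polynomial `H n` is an eigenfunction of `q ↦ q'' - 2 X q'` with eigenvalue `-2n`.
This operator is symmetric for the weight `exp (-x²)`: since `(exp (-x²) q')' = exp (-x²) (q'' - 2 x q')`,
one integration by parts turns `∫ p (q'' - 2 x q') exp (-x²)` into `-∫ p' q' exp (-x²)`. Hence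
`2n ∫ H m H n exp (-x²) = ∫ H m' H n' exp (-x²) = 2m ∫ H m H n exp (-x²)`, which forces the integral
to vanish when `m ≠ n`. -/

open Real MeasureTheory Finset Nat

/-- The physicists' Hermite polynomial, given by the explicit formula
`H n x = n! ∑_{k=0}^{⌊n/2⌋} (-1)^k (2x)^(n-2k) / (k! (n-2k)!)`. -/
noncomputable def physHermite (n : ℕ) (x : ℝ) : ℝ :=
  (n ! : ℝ) * ∑ k ∈ Finset.range (n / 2 + 1),
    (-1 : ℝ) ^ k * (2 * x) ^ (n - 2 * k) / ((k ! : ℝ) * ((n - 2 * k)! : ℝ))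

open Polynomial

theorem integrable_eval_mul_exp_neg_sq (p : ℝ[X]) :
    Integrable fun x : ℝ => p.eval x * exp (-x ^ 2) := by
  have hmonomial (k : ℕ) : Integrable fun x : ℝ => x ^ k * exp (-x ^ 2) := by
    simpa [Real.rpow_natCast] using integrable_rpow_mul_exp_neg_mul_sq (b := 1) one_pos
      (s := k) (by linarith [k.cast_nonneg (α := ℝ)])
  simp_rw [eval_eq_sum_range, sum_mul, mul_assoc]
  exact integrable_finsetSum _ fun k _ => (hmonomial k).const_mul _

theorem hasDerivAt_eval_mul_exp_neg_sq (p : ℝ[X]) (x : ℝ) :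
    HasDerivAt (fun x => p.eval x * exp (-x ^ 2))
      ((derivative p - 2 * X * p).eval x * exp (-x ^ 2)) x := by
  have hexp : HasDerivAt (fun x : ℝ => exp (-x ^ 2)) (exp (-x ^ 2) * -(2 * x)) x := by
    simpa using ((hasDerivAt_pow 2 x).fun_neg).exp
  refine ((p.hasDerivAt x).fun_mul hexp).congr_deriv ?_
  simp only [eval_sub, eval_mul, eval_ofNat, eval_X]
  ring

noncomputable def hermiteOperator : ℝ[X] →ₗ[ℝ] ℝ[X] :=
  derivative ∘ₗ derivative - LinearMap.mulLeft ℝ (2 * X) ∘ₗ derivative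

theorem hermiteOperator_apply (q : ℝ[X]) :
    hermiteOperator q = derivative (derivative q) - 2 * X * derivative q := rfl

theorem integral_eval_mul_hermiteOperator (p q : ℝ[X]) :
    ∫ x, p.eval x * ((hermiteOperator q).eval x * exp (-x ^ 2)) =
      -∫ x, (derivative p).eval x * ((derivative q).eval x * exp (-x ^ 2)) := by
  have hprod (r s : ℝ[X]) : Integrable fun x => r.eval x * (s.eval x * exp (-x ^ 2)) := by
    simpa [mul_assoc] using integrable_eval_mul_exp_neg_sq (r * s)
  exact integral_mul_deriv_eq_deriv_mul_of_integrable (fun x _ => p.hasDerivAt x)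
    (fun x _ => hasDerivAt_eval_mul_exp_neg_sq (derivative q) x) (hprod _ _) (hprod _ _) (hprod _ _)

theorem hermiteOperator_C_mul_X_pow (a : ℝ) (j : ℕ) :
    hermiteOperator (C a * X ^ j) =
      C (a * j * (j - 1 : ℕ)) * X ^ (j - 2) - C (2 * j * a) * X ^ j := by
  rw [hermiteOperator_apply, derivative_C_mul_X_pow, derivative_C_mul_X_pow]
  rcases j with _ | j
  · simp
  · simp only [Nat.add_sub_cancel, C_mul, C_ofNat, pow_succ]
    push_cast
    ring

noncomputable def physHermiteCoeff (n k : ℕ) : ℝ :=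
  (-1) ^ k * 2 ^ (n - 2 * k) * n ! / (k ! * (n - 2 * k)!)

noncomputable def physHermitePoly (n : ℕ) : ℝ[X] :=
  ∑ k ∈ range (n / 2 + 1), C (physHermiteCoeff n k) * X ^ (n - 2 * k)

theorem eval_physHermitePoly (n : ℕ) (x : ℝ) : (physHermitePoly n).eval x = physHermite n x := by
  simp only [physHermitePoly, physHermite, physHermiteCoeff, eval_finsetSum, eval_mul, eval_C,
    eval_pow, eval_X, mul_sum]
  refine sum_congr rfl fun k _ => ?_
  rw [mul_pow]
  ring_nf

theorem physHermiteCoeff_succ {n k : ℕ} (h : 2 * k + 2 ≤ n) :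
    4 * (k + 1 : ℕ) * physHermiteCoeff n (k + 1) =
      -(physHermiteCoeff n k * (n - 2 * k : ℕ) * (n - 2 * k - 1 : ℕ)) := by
  obtain ⟨d, rfl⟩ : ∃ d, n = 2 * k + 2 + d := ⟨n - (2 * k + 2), by omega⟩
  rw [physHermiteCoeff, physHermiteCoeff, show 2 * k + 2 + d - 2 * (k + 1) = d by omega,
    show 2 * k + 2 + d - 2 * k = d + 2 by omega, show d + 2 - 1 = d + 1 by omega,
    Nat.factorial_succ k, Nat.factorial_succ (d + 1), Nat.factorial_succ d]
  push_cast
  field_simp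
  ring

theorem hermiteOperator_physHermitePoly (n : ℕ) :
    hermiteOperator (physHermitePoly n) = C (-2 * n : ℝ) * physHermitePoly n := by
  set N := n / 2
  -- Term `k` of `(hermiteOperator + 2n) (physHermitePoly n)` is `lower k + diag k`, and the
  -- coefficient recursion `physHermiteCoeff_succ` makes `diag (k + 1)` cancel `lower k`.
  let lower (k : ℕ) : ℝ[X] :=
    C (physHermiteCoeff n k * (n - 2 * k : ℕ) * (n - 2 * k - 1 : ℕ)) * X ^ (n - 2 * k - 2)
  let diag (k : ℕ) : ℝ[X] := C (4 * k * physHermiteCoeff n k) * X ^ (n - 2 * k)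
  have hterm : ∀ k ∈ range (N + 1), hermiteOperator (C (physHermiteCoeff n k) * X ^ (n - 2 * k)) +
      C (2 * n : ℝ) * (C (physHermiteCoeff n k) * X ^ (n - 2 * k)) = lower k + diag k := by
    intro k hk
    have h2k : 2 * k ≤ n := by rw [mem_range] at hk; omega
    have hdiag : C (2 * n : ℝ) * (C (physHermiteCoeff n k) * X ^ (n - 2 * k)) -
        C (2 * (n - 2 * k : ℕ) * physHermiteCoeff n k) * X ^ (n - 2 * k) = diag k := by
      rw [← mul_assoc, ← C_mul, ← sub_mul, ← C_sub, Nat.cast_sub h2k]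
      congr 2
      push_cast
      ring
    rw [hermiteOperator_C_mul_X_pow]
    linear_combination hdiag
  have hdiag_succ : ∀ k ∈ range N, diag (k + 1) = -lower k := by
    intro k hk
    rw [mem_range] at hk
    simp only [diag, lower, physHermiteCoeff_succ (by omega : 2 * k + 2 ≤ n), C_neg, neg_mul,
      show n - 2 * (k + 1) = n - 2 * k - 2 by omega]
  have hdiag_zero : diag 0 = 0 := by simp [diag]
  have hlower_last : lower N = 0 := by
    have hvanish : (n - 2 * N) * (n - 2 * N - 1) = 0 := by
      rcases Nat.even_or_odd n with ⟨r, hr⟩ | ⟨r, hr⟩ <;> simp [N, hr] <;> omega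
    simp only [lower]
    rw [mul_assoc, ← Nat.cast_mul, hvanish]
    simp
  have hsum : hermiteOperator (physHermitePoly n) + C (2 * n : ℝ) * physHermitePoly n =
      ∑ k ∈ range (N + 1), (lower k + diag k) := by
    rw [physHermitePoly, map_sum, mul_sum, ← sum_add_distrib]
    exact sum_congr rfl hterm
  have htelescope : ∑ k ∈ range (N + 1), (lower k + diag k) = 0 := by
    rw [sum_add_distrib, sum_range_succ, sum_range_succ', hlower_last, hdiag_zero,
      sum_congr rfl hdiag_succ, sum_neg_distrib]
    abel
  rw [neg_mul, C_neg]
  linear_combination hsum.trans htelescope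

theorem two_mul_integral_physHermite_mul_physHermite (m n : ℕ) :
    2 * n * ∫ x, physHermite m x * physHermite n x * exp (-x ^ 2) =
      ∫ x, (derivative (physHermitePoly m)).eval x *
        ((derivative (physHermitePoly n)).eval x * exp (-x ^ 2)) := by
  have h := integral_eval_mul_hermiteOperator (physHermitePoly m) (physHermitePoly n)
  simp only [hermiteOperator_physHermitePoly, eval_mul, eval_C, eval_physHermitePoly] at h
  rw [← neg_neg (∫ x, _ * (_ * _)), ← h, ← integral_const_mul, ← integral_neg]
  congr 1 with x
  ring

/-- The physicists' Hermite polynomials are pairwise orthogonal on `ℝ` with respect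
to the weight function `exp (-x²)`. -/
theorem physHermite_orthogonal (m n : ℕ) (hmn : m ≠ n) :
    ∫ x : ℝ, physHermite m x * physHermite n x * Real.exp (-x ^ 2) = 0 := by
  have h := two_mul_integral_physHermite_mul_physHermite n m
  simp only [mul_comm (physHermite n _), mul_left_comm ((derivative (physHermitePoly n)).eval _),
    ← two_mul_integral_physHermite_mul_physHermite m n] at h
  by_contra hI
  exact hmn (by exact_mod_cast mul_left_cancel₀ two_ne_zero (mul_right_cancel₀ hI h))
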